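/- Let n ≥ 2, let H = ∏_{i=1}^n [a_i, b_i] ⊆ ℝ^n be a rectangle with a_i < b_i for all i, let F be a facet of H with respect to variable i (so the i-th coordinate is fixed to a_i or b_i), and let X ⊆ F. Then lim_{κ → ∞} λ^κ_{n−1}(X) = λ*_{n−1}(X), i.e. the (n−1)-dimensional rectangular κ-grid measures of X on the facet grid converge to the (n−1)-dimensional Lebesgue outer measure of the projection of X omitting coordinate i. -/

import Mathlib

open MeasureTheory Set Filter

/-- The projection `π̂_i` of `ℝ^n` omitting the `i`-th coordinate. -/
def projOmit (n : ℕ) (i : Fin n) (x : Fin n → ℝ) : {j : Fin n // j ≠ i} → ℝ :=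
  fun j => x j.1

/-- The κ-tile of the facet `{x ∈ ∏ j, [a j, b j] | x i = c}` indexed by the
multi-index `k` on the coordinates other than `i`. -/
noncomputable def facetTile (n : ℕ) (a b : Fin n → ℝ) (i : Fin n) (c : ℝ) (κ : ℕ)
    (k : {j : Fin n // j ≠ i} → ℕ) : Set (Fin n → ℝ) :=
  {x | x i = c ∧ ∀ j : {j : Fin n // j ≠ i},
    x j.1 ∈ Set.Icc (a j.1 + (k j : ℝ) / κ * (b j.1 - a j.1))
      (a j.1 + ((k j : ℝ) + 1) / κ * (b j.1 - a j.1))}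

/-- The common `(n-1)`-dimensional volume of a κ-tile of a facet w.r.t. variable `i`. -/
noncomputable def facetTileVol (n : ℕ) (a b : Fin n → ℝ) (i : Fin n) (κ : ℕ) : ℝ :=
  ∏ j : {j : Fin n // j ≠ i}, (b j.1 - a j.1) / κ

/-- The facet tile indexed by `k` belongs to `Tiles^κ_{n-1}(X)`: the `(n-1)`-dimensional
Lebesgue outer measure (of the projection omitting `i`) of the intersection of the tile
with `X` is at least half the `(n-1)`-dimensional volume of the tile. -/
def isApproxFacetTile (n : ℕ) (a b : Fin n → ℝ) (i : Fin n) (c : ℝ) (κ : ℕ)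
    (X : Set (Fin n → ℝ)) (k : {j : Fin n // j ≠ i} → Fin κ) : Prop :=
  ENNReal.ofReal (facetTileVol n a b i κ) / 2 ≤
    volume (projOmit n i '' (facetTile n a b i c κ (fun j => (k j : ℕ)) ∩ X))

open Classical in
/-- The `(n-1)`-dimensional rectangular κ-grid measure `λ^κ_{n-1}(X)` of a subset `X` of
the facet with `i`-th coordinate fixed to `c`. -/
noncomputable def facetGridMeasure (n : ℕ) (a b : Fin n → ℝ) (i : Fin n) (c : ℝ) (κ : ℕ)
    (X : Set (Fin n → ℝ)) : ℝ :=
  ∑ k : {j : Fin n // j ≠ i} → Fin κ,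
    if isApproxFacetTile n a b i c κ X k then facetTileVol n a b i κ else 0

/-!
Via `projOmit`, the facet becomes the box `∏_{j ≠ i} [a_j, b_j]`, the κ-tiles of `X` become the
grid cells meeting `Y = π̂_i(X)` in at least half of their volume, and `λ^κ(X)` becomes the volume
of the union `U_κ` of these cells. Grid cells are comparable to balls uniformly in `κ`, so they are
admissible sets of a Vitali family, and the Lebesgue density theorem for a measurable hull `Z` of
`Y` shows that almost every point of `Z` eventually lies in `U_κ` while almost every point outside
`Z` eventually does not. Dominated convergence gives `vol(U_κ) → vol(Z) = λ*(Y)`.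
-/

open Metric Topology
open scoped ENNReal

lemma exists_fin_le_mul_le {κ : ℕ} {t : ℝ} (ht : t ∈ Icc (0 : ℝ) 1) (hκ : 1 ≤ κ) :
    ∃ m : Fin κ, (m : ℝ) ≤ κ * t ∧ κ * t ≤ m + 1 := by
  have hs : 0 ≤ (κ : ℝ) * t := mul_nonneg κ.cast_nonneg ht.1
  rcases lt_or_ge ⌊(κ : ℝ) * t⌋₊ κ with h | h
  · exact ⟨⟨_, h⟩, Nat.floor_le hs, (Nat.lt_floor_add_one _).le⟩
  · have hκt : (κ : ℝ) ≤ κ * t := (Nat.le_floor_iff hs).1 h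
    refine ⟨⟨κ - 1, by omega⟩, ?_, ?_⟩ <;> simp only [Nat.cast_sub hκ, Nat.cast_one]
    · linarith
    · nlinarith [ht.2]

section Grid

variable {ι : Type*} {A B : ι → ℝ} {κ : ℕ}

def gridCell (A B : ι → ℝ) (κ : ℕ) (k : ι → ℕ) : Set (ι → ℝ) :=
  univ.pi fun j =>
    Icc (A j + (k j : ℝ) / κ * (B j - A j)) (A j + ((k j : ℝ) + 1) / κ * (B j - A j))

lemma isClosed_gridCell (k : ι → ℕ) : IsClosed (gridCell A B κ k) :=
  isClosed_set_pi fun _ _ => isClosed_Icc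

lemma mem_gridCell_iff (hAB : ∀ j, A j < B j) (hκ : 1 ≤ κ) {k : ι → ℕ} {x : ι → ℝ} :
    x ∈ gridCell A B κ k ↔ ∀ j,
      (k j : ℝ) ≤ κ * ((x j - A j) / (B j - A j)) ∧ κ * ((x j - A j) / (B j - A j)) ≤ k j + 1 := by
  have hκ₀ : (0 : ℝ) < κ := by exact_mod_cast hκ
  refine mem_univ_pi.trans (forall_congr' fun j => ?_)
  have hBA : 0 < B j - A j := sub_pos.2 (hAB j)
  rw [mem_Icc, ← le_sub_iff_add_le', ← sub_le_iff_le_add', ← le_div_iff₀ hBA,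
    ← div_le_iff₀ hBA, div_le_iff₀' hκ₀, le_div_iff₀' hκ₀]

lemma gridCell_subset_pi_Icc (hAB : ∀ j, A j < B j) {k : ι → ℕ} (hk : ∀ j, k j < κ) :
    gridCell A B κ k ⊆ univ.pi fun j => Icc (A j) (B j) := by
  refine pi_mono fun j _ => Icc_subset_Icc ?_ ?_
  · have := sub_pos.2 (hAB j)
    have : 0 ≤ (k j : ℝ) / κ := by positivity
    nlinarith
  · have hκ₀ : (0 : ℝ) < κ := by exact_mod_cast (k j).zero_le.trans_lt (hk j)
    have : ((k j : ℝ) + 1) / κ ≤ 1 := (div_le_one hκ₀).2 (by exact_mod_cast hk j)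
    nlinarith [sub_pos.2 (hAB j)]

lemma exists_mem_gridCell (hAB : ∀ j, A j < B j) (hκ : 1 ≤ κ) {x : ι → ℝ}
    (hx : x ∈ univ.pi fun j => Icc (A j) (B j)) :
    ∃ k : ι → Fin κ, x ∈ gridCell A B κ (k · : ι → ℕ) := by
  have hratio : ∀ j, (x j - A j) / (B j - A j) ∈ Icc (0 : ℝ) 1 := fun j =>
    have hBA := sub_pos.2 (hAB j)
    ⟨div_nonneg (by linarith [(hx j trivial).1]) hBA.le,
      (div_le_one hBA).2 (by linarith [(hx j trivial).2])⟩
  choose k hk using fun j => exists_fin_le_mul_le (hratio j) hκ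
  exact ⟨k, (mem_gridCell_iff hAB hκ).2 hk⟩

variable [Fintype ι]

lemma measurableSet_gridCell (k : ι → ℕ) : MeasurableSet (gridCell A B κ k) :=
  MeasurableSet.univ_pi fun _ => measurableSet_Icc

lemma volume_gridCell (hAB : ∀ j, A j < B j) (k : ι → ℕ) :
    volume (gridCell A B κ k) = ENNReal.ofReal (∏ j, (B j - A j) / κ) := by
  rw [gridCell, volume_pi_pi, ENNReal.ofReal_prod_of_nonneg fun j _ =>
    div_nonneg (sub_pos.2 (hAB j)).le κ.cast_nonneg]
  refine Finset.prod_congr rfl fun j _ => ?_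
  rw [Real.volume_Icc]
  ring_nf

lemma gridCell_subset_closedBall (hAB : ∀ j, A j < B j) {k : ι → ℕ} {x : ι → ℝ}
    (hx : x ∈ gridCell A B κ k) :
    gridCell A B κ k ⊆ closedBall x ((∑ j, (B j - A j)) / κ) := by
  have hBA : ∀ j, 0 ≤ B j - A j := fun j => (sub_pos.2 (hAB j)).le
  intro y hy
  have hR : 0 ≤ (∑ j, (B j - A j)) / κ :=
    div_nonneg (Finset.sum_nonneg fun j _ => hBA j) κ.cast_nonneg
  refine (dist_pi_le_iff hR).2 fun j => ?_
  calc dist (y j) (x j) ≤ (B j - A j) / κ := by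
        convert Real.dist_le_of_mem_Icc (hy j trivial) (hx j trivial) using 1
        ring
    _ ≤ (∑ j, (B j - A j)) / κ := by
        gcongr
        exact Finset.single_le_sum (fun j _ => hBA j) (Finset.mem_univ j)

lemma volume_gridCell_inter_gridCell_of_lt (hAB : ∀ j, A j < B j) {k k' : ι → ℕ} {j : ι}
    (h : k j < k' j) : volume (gridCell A B κ k ∩ gridCell A B κ k') = 0 := by
  rw [gridCell, gridCell, ← pi_inter_distrib, volume_pi_pi]
  refine Finset.prod_eq_zero (Finset.mem_univ j) (measure_mono_null
    ((Icc_inter_Icc).trans_subset (Icc_subset_Icc le_sup_right inf_le_left)) ?_)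
  rw [Real.volume_Icc, ENNReal.ofReal_eq_zero, sub_nonpos]
  have : ((k j : ℝ) + 1) ≤ k' j := by exact_mod_cast h
  have := sub_pos.2 (hAB j)
  gcongr

lemma volume_gridCell_inter_gridCell (hAB : ∀ j, A j < B j) {k k' : ι → ℕ} (h : k ≠ k') :
    volume (gridCell A B κ k ∩ gridCell A B κ k') = 0 := by
  obtain ⟨j, hj⟩ := Function.ne_iff.1 h
  rcases hj.lt_or_gt with h | h
  · exact volume_gridCell_inter_gridCell_of_lt hAB h
  · rw [inter_comm]
    exact volume_gridCell_inter_gridCell_of_lt hAB h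

end Grid

section Vitali

variable {ι : Type*} [Fintype ι] {A B : ι → ℝ} {κ : ℕ}

/-- The first term gives the doubling condition for balls; the second lets a grid cell of mesh `κ`
be compared with the ball of radius `3 * (∑ j, (B j - A j)) / κ` around any of its points. -/
noncomputable def gridVitaliConst (A B : ι → ℝ) : ℝ :=
  max (3 ^ Fintype.card ι) ((6 * ∑ j, (B j - A j)) ^ Fintype.card ι / ∏ j, (B j - A j))

lemma gridVitaliConst_nonneg : 0 ≤ gridVitaliConst A B :=
  le_max_of_le_left (by positivity)

lemma volume_closedBall_three_mul_le (x : ι → ℝ) {r : ℝ} (hr : 0 ≤ r) :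
    volume (closedBall x (3 * r)) ≤
      ENNReal.ofReal (gridVitaliConst A B) * volume (closedBall x r) := by
  rw [Real.volume_pi_closedBall x (by positivity), Real.volume_pi_closedBall x hr,
    ← ENNReal.ofReal_mul gridVitaliConst_nonneg, mul_left_comm, mul_pow]
  gcongr
  exact le_max_left _ _

lemma volume_closedBall_le_gridVitaliConst_mul (hAB : ∀ j, A j < B j) (x : ι → ℝ)
    (k : ι → ℕ) :
    volume (closedBall x (3 * ((∑ j, (B j - A j)) / κ))) ≤
      ENNReal.ofReal (gridVitaliConst A B) * volume (gridCell A B κ k) := by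
  have hR : 0 ≤ ∑ j, (B j - A j) := Finset.sum_nonneg fun j _ => (sub_pos.2 (hAB j)).le
  have hP : 0 < ∏ j, (B j - A j) := Finset.prod_pos fun j _ => sub_pos.2 (hAB j)
  rw [Real.volume_pi_closedBall x (by positivity), volume_gridCell hAB,
    ← ENNReal.ofReal_mul gridVitaliConst_nonneg, Finset.prod_div_distrib, Finset.prod_const,
    Finset.card_univ]
  refine ENNReal.ofReal_le_ofReal ?_
  unfold gridVitaliConst
  generalize ∑ j, (B j - A j) = R at hR ⊢
  generalize ∏ j, (B j - A j) = P at hP ⊢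
  calc (2 * (3 * (R / κ))) ^ Fintype.card ι
      = (6 * R) ^ Fintype.card ι / P * (P / κ ^ Fintype.card ι) := by
        rw [div_mul_div_cancel₀ hP.ne', ← div_pow]
        ring
    _ ≤ max (3 ^ Fintype.card ι) ((6 * R) ^ Fintype.card ι / P) * (P / κ ^ Fintype.card ι) := by
        gcongr
        exact le_max_right _ _

noncomputable def gridVitaliFamily (A B : ι → ℝ) : VitaliFamily (volume : Measure (ι → ℝ)) :=
  Vitali.vitaliFamily volume (gridVitaliConst A B).toNNReal fun x =>
    Eventually.frequently <| eventually_nhdsWithin_of_forall fun _ hr =>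
      volume_closedBall_three_mul_le x (le_of_lt hr)

lemma interior_gridCell_nonempty (hAB : ∀ j, A j < B j) (hκ : 1 ≤ κ) (k : ι → ℕ) :
    (interior (gridCell A B κ k)).Nonempty := by
  rw [gridCell, interior_pi_set finite_univ, univ_pi_nonempty_iff]
  intro j
  rw [interior_Icc, nonempty_Ioo]
  have := sub_pos.2 (hAB j)
  have : (0 : ℝ) < κ := by exact_mod_cast hκ
  gcongr
  exact lt_add_one _

lemma gridCell_mem_setsAt (hAB : ∀ j, A j < B j) (hκ : 1 ≤ κ) {k : ι → ℕ} {x : ι → ℝ}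
    (hx : x ∈ gridCell A B κ k) : gridCell A B κ k ∈ (gridVitaliFamily A B).setsAt x :=
  ⟨isClosed_gridCell k, interior_gridCell_nonempty hAB hκ k, _, gridCell_subset_closedBall hAB hx,
    volume_closedBall_le_gridVitaliConst_mul hAB x k⟩

lemma eventually_forall_gridCell_of_eventually_filterAt (hAB : ∀ j, A j < B j) {x : ι → ℝ}
    {P : Set (ι → ℝ) → Prop} (h : ∀ᶠ t in (gridVitaliFamily A B).filterAt x, P t) :
    ∀ᶠ κ in atTop, ∀ k : ι → ℕ, x ∈ gridCell A B κ k → P (gridCell A B κ k) := by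
  obtain ⟨ε, hε, hP⟩ := (gridVitaliFamily A B).eventually_filterAt_iff.1 h
  filter_upwards [(tendsto_const_div_atTop_nhds_zero_nat (∑ j, (B j - A j))).eventually_lt_const hε,
    eventually_ge_atTop 1] with κ hsmall hκ k hx
  exact hP _ (gridCell_mem_setsAt hAB hκ hx)
    ((gridCell_subset_closedBall hAB hx).trans (closedBall_subset_closedBall hsmall.le))

end Vitali

section GridMeasure

variable {ι : Type*} [Fintype ι] {A B : ι → ℝ} {κ : ℕ} {Y Z : Set (ι → ℝ)}

open Classical in
noncomputable def gridTiles (A B : ι → ℝ) (Y : Set (ι → ℝ)) (κ : ℕ) : Finset (ι → Fin κ) :=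
  Finset.univ.filter fun k =>
    ENNReal.ofReal (∏ j, (B j - A j) / κ) / 2 ≤ volume (gridCell A B κ (k · : ι → ℕ) ∩ Y)

noncomputable def gridMeasure (A B : ι → ℝ) (Y : Set (ι → ℝ)) (κ : ℕ) : ℝ :=
  ∑ _k ∈ gridTiles A B Y κ, ∏ j, (B j - A j) / κ

def gridUnion (A B : ι → ℝ) (Y : Set (ι → ℝ)) (κ : ℕ) : Set (ι → ℝ) :=
  ⋃ k ∈ gridTiles A B Y κ, gridCell A B κ (k · : ι → ℕ)

lemma measurableSet_gridUnion : MeasurableSet (gridUnion A B Y κ) :=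
  Finset.measurableSet_biUnion _ fun _ _ => measurableSet_gridCell _

lemma gridUnion_subset_pi_Icc (hAB : ∀ j, A j < B j) :
    gridUnion A B Y κ ⊆ univ.pi fun j => Icc (A j) (B j) :=
  iUnion₂_subset fun k _ => gridCell_subset_pi_Icc hAB fun j => (k j).isLt

lemma volume_gridUnion (hAB : ∀ j, A j < B j) :
    volume (gridUnion A B Y κ) = ENNReal.ofReal (gridMeasure A B Y κ) := by
  have hV : 0 ≤ ∏ j, (B j - A j) / κ :=
    Finset.prod_nonneg fun j _ => div_nonneg (sub_pos.2 (hAB j)).le κ.cast_nonneg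
  rw [gridUnion, measure_biUnion_finset₀, gridMeasure, ENNReal.ofReal_sum_of_nonneg fun _ _ => hV]
  · exact Finset.sum_congr rfl fun k _ => volume_gridCell hAB _
  · intro k _ k' _ hkk'
    exact volume_gridCell_inter_gridCell hAB fun h => hkk' (funext fun j => Fin.ext (congrFun h j))
  · exact fun _ _ => (measurableSet_gridCell _).nullMeasurableSet

lemma mem_gridTiles_iff_le_div (hAB : ∀ j, A j < B j) (hκ : 1 ≤ κ)
    (hZY : ∀ t, MeasurableSet t → volume (Z ∩ t) = volume (Y ∩ t)) {k : ι → Fin κ} :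
    k ∈ gridTiles A B Y κ ↔
      2⁻¹ ≤ volume (Z ∩ gridCell A B κ (k · : ι → ℕ)) / volume (gridCell A B κ (k · : ι → ℕ)) := by
  have hκ₀ : (0 : ℝ) < κ := by exact_mod_cast hκ
  have hV : 0 < ∏ j, (B j - A j) / κ := Finset.prod_pos fun j _ => div_pos (sub_pos.2 (hAB j)) hκ₀
  rw [gridTiles, Finset.mem_filter, hZY _ (measurableSet_gridCell _), volume_gridCell hAB,
    inter_comm, ENNReal.le_div_iff_mul_le (.inl (ENNReal.ofReal_pos.2 hV).ne')
    (.inl ENNReal.ofReal_ne_top), ENNReal.div_eq_inv_mul]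
  simp only [Finset.mem_univ, true_and]

lemma eventually_mem_gridUnion_iff (hAB : ∀ j, A j < B j)
    (hZ : Z ⊆ univ.pi fun j => Icc (A j) (B j))
    (hZY : ∀ t, MeasurableSet t → volume (Z ∩ t) = volume (Y ∩ t)) {x : ι → ℝ}
    (hx : Tendsto (fun t => volume (Z ∩ t) / volume t) ((gridVitaliFamily A B).filterAt x)
      (𝓝 (Z.indicator 1 x))) :
    ∀ᶠ κ in atTop, x ∈ gridUnion A B Y κ ↔ x ∈ Z := by
  by_cases hxZ : x ∈ Z
  · rw [indicator_of_mem hxZ, Pi.one_apply] at hx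
    have hdense := eventually_forall_gridCell_of_eventually_filterAt hAB
      (hx.eventually (lt_mem_nhds ENNReal.one_half_lt_one))
    filter_upwards [hdense, eventually_ge_atTop 1] with κ hdense hκ
    obtain ⟨k, hk⟩ := exists_mem_gridCell hAB hκ (hZ hxZ)
    simp only [hxZ, iff_true]
    exact mem_iUnion₂.2 ⟨k, (mem_gridTiles_iff_le_div hAB hκ hZY).2 (hdense _ hk).le, hk⟩
  · rw [indicator_of_notMem hxZ] at hx
    have hsparse := eventually_forall_gridCell_of_eventually_filterAt hAB
      (hx.eventually (gt_mem_nhds (by norm_num : (0 : ℝ≥0∞) < 2⁻¹)))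
    filter_upwards [hsparse, eventually_ge_atTop 1] with κ hsparse hκ
    simp only [hxZ, iff_false, gridUnion, mem_iUnion₂, not_exists]
    exact fun k hk hxk => ((mem_gridTiles_iff_le_div hAB hκ hZY).1 hk).not_gt (hsparse _ hxk)

theorem tendsto_volume_gridUnion (hAB : ∀ j, A j < B j)
    (hY : Y ⊆ univ.pi fun j => Icc (A j) (B j)) :
    Tendsto (fun κ => volume (gridUnion A B Y κ)) atTop (𝓝 (volume Y)) := by
  have hbox : MeasurableSet (univ.pi fun j => Icc (A j) (B j)) :=
    MeasurableSet.univ_pi fun _ => measurableSet_Icc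
  set Z := toMeasurable volume Y ∩ univ.pi fun j => Icc (A j) (B j)
  have hZ : MeasurableSet Z := (measurableSet_toMeasurable _ _).inter hbox
  have hZY : ∀ t, MeasurableSet t → volume (Z ∩ t) = volume (Y ∩ t) := fun t ht => by
    rw [inter_assoc, Measure.measure_toMeasurable_inter_of_sFinite (hbox.inter ht),
      ← inter_assoc, inter_eq_left.2 hY]
  have hvol : volume Z = volume Y := by simpa using hZY univ .univ
  rw [← hvol]
  refine tendsto_measure_of_ae_tendsto_indicator atTop hZ (fun _ => measurableSet_gridUnion) hbox
    (isCompact_univ_pi fun _ => isCompact_Icc).measure_ne_top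
    (.of_forall fun _ => gridUnion_subset_pi_Icc hAB) ?_
  filter_upwards [(gridVitaliFamily A B).ae_tendsto_measure_inter_div_of_measurableSet hZ]
    with x hx
  exact eventually_mem_gridUnion_iff hAB inter_subset_right hZY hx

theorem tendsto_gridMeasure (hAB : ∀ j, A j < B j)
    (hY : Y ⊆ univ.pi fun j => Icc (A j) (B j)) :
    Tendsto (fun κ => gridMeasure A B Y κ) atTop (𝓝 (volume Y).toReal) := by
  have hY_ne_top : volume Y ≠ ⊤ :=
    measure_ne_top_of_subset hY (isCompact_univ_pi fun _ => isCompact_Icc).measure_ne_top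
  refine ((ENNReal.tendsto_toReal hY_ne_top).comp (tendsto_volume_gridUnion hAB hY)).congr
    fun κ => ?_
  rw [Function.comp_apply, volume_gridUnion hAB, ENNReal.toReal_ofReal]
  exact Finset.sum_nonneg fun _ _ =>
    Finset.prod_nonneg fun j _ => div_nonneg (sub_pos.2 (hAB j)).le κ.cast_nonneg

end GridMeasure

section Facet

variable {n : ℕ} {a b : Fin n → ℝ} {i : Fin n} {c : ℝ} {κ : ℕ} {X : Set (Fin n → ℝ)}

lemma projOmit_image_facetTile_inter (hX : X ⊆ {x | x i = c}) (k : {j : Fin n // j ≠ i} → ℕ) :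
    projOmit n i '' (facetTile n a b i c κ k ∩ X) =
      gridCell (fun j : {j : Fin n // j ≠ i} => a j) (fun j => b j) κ k ∩ projOmit n i '' X := by
  ext y
  constructor
  · rintro ⟨x, ⟨hxF, hxX⟩, rfl⟩
    exact ⟨fun j _ => hxF.2 j, x, hxX, rfl⟩
  · rintro ⟨hy, x, hxX, rfl⟩
    exact ⟨x, ⟨⟨hX hxX, fun j => hy j trivial⟩, hxX⟩, rfl⟩

lemma facetGridMeasure_eq_gridMeasure (hX : X ⊆ {x | x i = c}) :
    facetGridMeasure n a b i c κ X =
      gridMeasure (fun j : {j : Fin n // j ≠ i} => a j) (fun j => b j) (projOmit n i '' X) κ := by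
  classical
  rw [facetGridMeasure, gridMeasure, gridTiles, Finset.sum_filter]
  refine Finset.sum_congr (by congr!) fun k _ => if_congr ?_ rfl rfl
  rw [isApproxFacetTile, projOmit_image_facetTile_inter hX]
  rfl

end Facet

theorem facetGridMeasure_tendsto_outerMeasure_general (n : ℕ) (a b : Fin n → ℝ)
    (hab : ∀ i, a i < b i) (i : Fin n) (c : ℝ)
    (X : Set (Fin n → ℝ))
    (hX : X ⊆ {x | (∀ j, x j ∈ Set.Icc (a j) (b j)) ∧ x i = c}) :
    Tendsto (fun κ : ℕ => facetGridMeasure n a b i c κ X) atTop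
      (nhds (volume (projOmit n i '' X)).toReal) := by
  have hY : projOmit n i '' X ⊆ univ.pi fun j : {j : Fin n // j ≠ i} => Icc (a j) (b j) := by
    rintro _ ⟨x, hx, rfl⟩ j -
    exact (hX hx).1 j
  simp_rw [facetGridMeasure_eq_gridMeasure fun x hx => (hX hx).2]
  exact tendsto_gridMeasure (fun j => hab j) hY

/-- For any subset `X` of a facet `F` of the rectangle `H = ∏ j, [a j, b j]` w.r.t.
variable `i` (the `i`-th coordinate being fixed to `c = a i` or `c = b i`), the
`(n-1)`-dimensional rectangular κ-grid measures of `X` converge, as `κ → ∞`, to the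
`(n-1)`-dimensional Lebesgue outer measure of the projection of `X` omitting
coordinate `i`. -/
theorem facetGridMeasure_tendsto_outerMeasure (n : ℕ) (hn : 2 ≤ n) (a b : Fin n → ℝ)
    (hab : ∀ i, a i < b i) (i : Fin n) (c : ℝ) (hc : c = a i ∨ c = b i)
    (X : Set (Fin n → ℝ))
    (hX : X ⊆ {x | (∀ j, x j ∈ Set.Icc (a j) (b j)) ∧ x i = c}) :
    Tendsto (fun κ : ℕ => facetGridMeasure n a b i c κ X) atTop
      (nhds (volume (projOmit n i '' X)).toReal) :=
  facetGridMeasure_tendsto_outerMeasure_general n a b hab i c X hX
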